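/- arXiv:1009.1241 — 3 statements merged into one kernel-verified Lean document; each statement's English description precedes it below -/
import Mathlib

section
/- Let T > 0, θ > 0, σ ≥ 0, and let ω > 0 satisfy θ·sin(ωT) + ω·cos(ωT) = 0. Then for every t ∈ [0,T], ∫_0^T (σ²/(2θ))·(exp(−θ|t−s|) − exp(−θ(t+s)))·sin(ωs) ds = (σ²/(ω²+θ²))·sin(ωt). That is, sin(ω·) is an eigenfunction, with eigenvalue σ²/(ω²+θ²), of the integral operator associated with the covariance kernel of the Ornstein–Uhlenbeck process started at 0. -/
open Real MeasureTheory

/-!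
On `s ≤ t` the kernel `exp (-θ|t-s|) - exp (-θ(t+s))` factors as
`exp (-θt) (exp (θs) - exp (-θs))`, and on `t ≤ s` as `(exp (θt) - exp (-θt)) exp (-θs)`,
so the integral against `sin (ω·)` reduces to integrals of `exp (±θs) sin (ωs)`, which have
the explicit primitive `expSinPrimitive`. The condition `θ sin (ωT) + ω cos (ωT) = 0` says
exactly that the primitive for `exp (-θs)` vanishes at `T`, and the remaining boundary terms
combine to `2θ sin (ωt) / (θ² + ω²)`.
-/

noncomputable def expSinPrimitive (a ω s : ℝ) : ℝ :=
  exp (a * s) * (a * sin (ω * s) - ω * cos (ω * s)) / (a ^ 2 + ω ^ 2)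

section Primitive

variable {a ω : ℝ}

lemma hasDerivAt_expSinPrimitive (h : a ^ 2 + ω ^ 2 ≠ 0) (s : ℝ) :
    HasDerivAt (expSinPrimitive a ω) (exp (a * s) * sin (ω * s)) s := by
  have hlin (c : ℝ) : HasDerivAt (fun x => c * x) c s := by
    simpa using (hasDerivAt_id s).const_mul c
  have hexp := (hlin a).exp
  have hsin := ((hlin ω).sin).const_mul a
  have hcos := ((hlin ω).cos).const_mul ω
  refine ((hexp.mul (hsin.sub hcos)).div_const (a ^ 2 + ω ^ 2)).congr_deriv ?_
  simp only [Pi.sub_apply]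
  field_simp
  ring

lemma integral_exp_mul_sin (h : a ^ 2 + ω ^ 2 ≠ 0) (x y : ℝ) :
    ∫ s in x..y, exp (a * s) * sin (ω * s) = expSinPrimitive a ω y - expSinPrimitive a ω x :=
  intervalIntegral.integral_eq_sub_of_hasDerivAt (fun s _ => hasDerivAt_expSinPrimitive h s)
    ((by fun_prop : Continuous fun s => exp (a * s) * sin (ω * s)).intervalIntegrable x y)

lemma expSinPrimitive_zero : expSinPrimitive a ω 0 = -ω / (a ^ 2 + ω ^ 2) := by
  simp [expSinPrimitive]

end Primitive

lemma expSinPrimitive_neg_eq_zero {θ ω T : ℝ}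
    (h : θ * sin (ω * T) + ω * cos (ω * T) = 0) : expSinPrimitive (-θ) ω T = 0 := by
  have : -(θ * sin (ω * T)) - ω * cos (ω * T) = 0 := by linarith
  simp [expSinPrimitive, this]

section Kernel

variable {θ t T : ℝ}

lemma integral_ouKernel_mul_of_nonneg {f : ℝ → ℝ} (hf : Continuous f) (ht : 0 ≤ t) :
    ∫ s in (0 : ℝ)..t, (exp (-θ * |t - s|) - exp (-θ * (t + s))) * f s
      = exp (-θ * t) *
          ((∫ s in (0 : ℝ)..t, exp (θ * s) * f s) - ∫ s in (0 : ℝ)..t, exp (-θ * s) * f s) := by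
  have hpos : Continuous fun s => exp (θ * s) * f s := by fun_prop
  have hneg : Continuous fun s => exp (-θ * s) * f s := by fun_prop
  rw [← intervalIntegral.integral_sub (hpos.intervalIntegrable _ _)
      (hneg.intervalIntegrable _ _), ← intervalIntegral.integral_const_mul]
  refine intervalIntegral.integral_congr fun s hs => ?_
  rw [Set.uIcc_of_le ht] at hs
  simp only [abs_of_nonneg (sub_nonneg.2 hs.2)]
  rw [show -θ * (t - s) = -θ * t + θ * s by ring, show -θ * (t + s) = -θ * t + -θ * s by ring,
    exp_add, exp_add]
  ring

lemma integral_ouKernel_mul_of_le (f : ℝ → ℝ) (htT : t ≤ T) :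
    ∫ s in t..T, (exp (-θ * |t - s|) - exp (-θ * (t + s))) * f s
      = (exp (θ * t) - exp (-θ * t)) * ∫ s in t..T, exp (-θ * s) * f s := by
  rw [← intervalIntegral.integral_const_mul]
  refine intervalIntegral.integral_congr fun s hs => ?_
  rw [Set.uIcc_of_le htT] at hs
  simp only [abs_sub_comm t s, abs_of_nonneg (sub_nonneg.2 hs.1)]
  rw [show -θ * (s - t) = θ * t + -θ * s by ring, show -θ * (t + s) = -θ * t + -θ * s by ring,
    exp_add, exp_add]
  ring

end Kernel

theorem ornstein_uhlenbeck_KL_eigenpair_general (T θ σ ω : ℝ) (hθ : 0 < θ)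
    (heq : θ * Real.sin (ω * T) + ω * Real.cos (ω * T) = 0)
    (t : ℝ) (ht : t ∈ Set.Icc 0 T) :
    ∫ s in (0:ℝ)..T,
        σ^2 / (2 * θ) * (Real.exp (-θ * |t - s|) - Real.exp (-θ * (t + s))) * Real.sin (ω * s)
      = σ^2 / (ω^2 + θ^2) * Real.sin (ω * t) := by
  obtain ⟨ht0, htT⟩ := ht
  have hθω : θ ^ 2 + ω ^ 2 ≠ 0 := by positivity
  have hsin : Continuous fun s => sin (ω * s) := by fun_prop
  simp only [mul_assoc, intervalIntegral.integral_const_mul]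
  have hcont : Continuous fun s => (exp (-θ * |t - s|) - exp (-θ * (t + s))) * sin (ω * s) := by
    fun_prop
  rw [← intervalIntegral.integral_add_adjacent_intervals (hcont.intervalIntegrable 0 t)
      (hcont.intervalIntegrable t T),
    integral_ouKernel_mul_of_nonneg hsin ht0, integral_ouKernel_mul_of_le _ htT,
    integral_exp_mul_sin hθω, integral_exp_mul_sin (a := -θ) (by simpa using hθω),
    integral_exp_mul_sin (a := -θ) (by simpa using hθω), expSinPrimitive_neg_eq_zero heq,
    expSinPrimitive_zero, expSinPrimitive_zero]
  have hexp : exp (-θ * t) = (exp (θ * t))⁻¹ := by rw [← exp_neg, neg_mul]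
  simp only [expSinPrimitive, neg_sq, hexp]
  field_simp
  ring

/-- Let `T > 0`, `θ > 0`, `σ ≥ 0`, and let `ω > 0` satisfy `θ·sin(ωT) + ω·cos(ωT) = 0`.
Then `sin(ω·)` is an eigenfunction, with eigenvalue `σ²/(ω²+θ²)`, of the integral operator
associated with the covariance kernel
`Γ(t,s) = (σ²/(2θ))(exp(−θ|t−s|) − exp(−θ(t+s)))` of the Ornstein–Uhlenbeck process
started at `0`. -/
theorem ornstein_uhlenbeck_KL_eigenpair (T θ σ ω : ℝ) (hT : 0 < T) (hθ : 0 < θ)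
    (hσ : 0 ≤ σ) (hω : 0 < ω) (heq : θ * Real.sin (ω * T) + ω * Real.cos (ω * T) = 0)
    (t : ℝ) (ht : t ∈ Set.Icc 0 T) :
    ∫ s in (0:ℝ)..T,
        σ^2 / (2 * θ) * (Real.exp (-θ * |t - s|) - Real.exp (-θ * (t + s))) * Real.sin (ω * s)
      = σ^2 / (ω^2 + θ^2) * Real.sin (ω * t) :=
  ornstein_uhlenbeck_KL_eigenpair_general T θ σ ω hθ heq t ht
end

section
/- Let T > 0, θ > 0, σ ≥ 0, and let ω > 0 satisfy 2θω·cos(ωT) + (θ² − ω²)·sin(ωT) = 0. Then the function φ(t) = ω·cos(ωt) + θ·sin(ωt) satisfies, for every t ∈ [0,T], ∫_0^T (σ²/(2θ))·exp(−θ|t−s|)·φ(s) ds = (σ²/(ω²+θ²))·φ(t). That is, φ is an eigenfunction, with eigenvalue σ²/(ω²+θ²), of the integral operator associated with the covariance kernel of the stationary Ornstein–Uhlenbeck process. -/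
open Real MeasureTheory intervalIntegral

/-! On `[0, t]` and on `[t, T]` the kernel `e^{-θ|t-s|}` is a pure exponential, so both pieces of
the integral have explicit primitives: `e^{-θ(t-s)} sin(ωs)` on the left and `e^{-θ(s-t)} ψ(s)`
on the right, where `ψ' - θψ = φ`. The left piece contributes `sin(ωt)`, the right one
`e^{-θ(T-t)} ψ(T) - ψ(t)`, and the transcendental equation for `ω` says exactly that `ψ(T) = 0`.
What remains, `sin(ωt) - ψ(t)`, is `2θ/(θ² + ω²)` times `φ(t)`. -/

noncomputable def ouEigenfunction (θ ω s : ℝ) : ℝ :=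
  ω * cos (ω * s) + θ * sin (ω * s)

/-- The solution `ψ` of `ψ' - θψ = φ` in the span of `cos(ωs)` and `sin(ωs)`. -/
noncomputable def ouRightPrimitive (θ ω s : ℝ) : ℝ :=
  ((ω ^ 2 - θ ^ 2) * sin (ω * s) - 2 * θ * ω * cos (ω * s)) / (θ ^ 2 + ω ^ 2)

@[fun_prop]
theorem continuous_ouEigenfunction (θ ω : ℝ) : Continuous (ouEigenfunction θ ω) := by
  unfold ouEigenfunction
  fun_prop

@[fun_prop]
theorem continuous_ouRightPrimitive (θ ω : ℝ) : Continuous (ouRightPrimitive θ ω) := by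
  unfold ouRightPrimitive
  fun_prop

theorem hasDerivAt_exp_mul_sin (θ ω t x : ℝ) :
    HasDerivAt (fun s => exp (-θ * (t - s)) * sin (ω * s))
      (exp (-θ * (t - x)) * ouEigenfunction θ ω x) x := by
  have hexp : HasDerivAt (fun s => exp (-θ * (t - s))) (exp (-θ * (t - x)) * θ) x := by
    simpa using (((hasDerivAt_id x).const_sub t).const_mul (-θ)).exp
  have hsin : HasDerivAt (fun s => sin (ω * s)) (cos (ω * x) * ω) x := by
    simpa using ((hasDerivAt_id x).const_mul ω).sin
  refine (hexp.mul hsin).congr_deriv ?_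
  unfold ouEigenfunction
  ring

theorem hasDerivAt_ouRightPrimitive (θ ω x : ℝ) (hθω : θ ^ 2 + ω ^ 2 ≠ 0) :
    HasDerivAt (ouRightPrimitive θ ω)
      (ouEigenfunction θ ω x + θ * ouRightPrimitive θ ω x) x := by
  have hsin : HasDerivAt (fun s => sin (ω * s)) (cos (ω * x) * ω) x := by
    simpa using ((hasDerivAt_id x).const_mul ω).sin
  have hcos : HasDerivAt (fun s => cos (ω * s)) (-sin (ω * x) * ω) x := by
    simpa using ((hasDerivAt_id x).const_mul ω).cos
  refine (((hsin.const_mul (ω ^ 2 - θ ^ 2)).sub (hcos.const_mul (2 * θ * ω))).div_const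
    (θ ^ 2 + ω ^ 2)).congr_deriv ?_
  unfold ouEigenfunction ouRightPrimitive
  field_simp
  ring

theorem hasDerivAt_exp_mul_ouRightPrimitive (θ ω t x : ℝ) (hθω : θ ^ 2 + ω ^ 2 ≠ 0) :
    HasDerivAt (fun s => exp (-θ * (s - t)) * ouRightPrimitive θ ω s)
      (exp (-θ * (x - t)) * ouEigenfunction θ ω x) x := by
  have hexp : HasDerivAt (fun s => exp (-θ * (s - t))) (exp (-θ * (x - t)) * -θ) x := by
    simpa using (((hasDerivAt_id x).sub_const t).const_mul (-θ)).exp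
  refine (hexp.mul (hasDerivAt_ouRightPrimitive θ ω x hθω)).congr_deriv ?_
  ring

theorem integral_exp_abs_mul_ouEigenfunction_left (θ ω t : ℝ) (ht : 0 ≤ t) :
    ∫ s in (0 : ℝ)..t, exp (-θ * |t - s|) * ouEigenfunction θ ω s = sin (ω * t) := by
  have hkernel : Set.EqOn (fun s => exp (-θ * |t - s|) * ouEigenfunction θ ω s)
      (fun s => exp (-θ * (t - s)) * ouEigenfunction θ ω s) (Set.uIcc 0 t) := by
    intro s hs
    rw [Set.uIcc_of_le ht] at hs
    simp only [abs_of_nonneg (sub_nonneg.mpr hs.2)]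
  rw [integral_congr hkernel,
    integral_eq_sub_of_hasDerivAt (fun x _ => hasDerivAt_exp_mul_sin θ ω t x)
      (by apply Continuous.intervalIntegrable; fun_prop)]
  simp

theorem integral_exp_abs_mul_ouEigenfunction_right (θ ω t T : ℝ) (htT : t ≤ T)
    (hθω : θ ^ 2 + ω ^ 2 ≠ 0) :
    ∫ s in t..T, exp (-θ * |t - s|) * ouEigenfunction θ ω s
      = exp (-θ * (T - t)) * ouRightPrimitive θ ω T - ouRightPrimitive θ ω t := by
  have hkernel : Set.EqOn (fun s => exp (-θ * |t - s|) * ouEigenfunction θ ω s)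
      (fun s => exp (-θ * (s - t)) * ouEigenfunction θ ω s) (Set.uIcc t T) := by
    intro s hs
    rw [Set.uIcc_of_le htT] at hs
    simp only [abs_sub_comm t s, abs_of_nonneg (sub_nonneg.mpr hs.1)]
  rw [integral_congr hkernel,
    integral_eq_sub_of_hasDerivAt (fun x _ => hasDerivAt_exp_mul_ouRightPrimitive θ ω t x hθω)
      (by apply Continuous.intervalIntegrable; fun_prop)]
  simp

theorem ouRightPrimitive_eq_zero (θ ω T : ℝ)
    (heq : 2 * θ * ω * cos (ω * T) + (θ ^ 2 - ω ^ 2) * sin (ω * T) = 0) :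
    ouRightPrimitive θ ω T = 0 := by
  rw [ouRightPrimitive, div_eq_zero_iff]
  left
  linear_combination -heq

theorem sin_sub_ouRightPrimitive (θ ω t : ℝ) (hθω : θ ^ 2 + ω ^ 2 ≠ 0) :
    sin (ω * t) - ouRightPrimitive θ ω t = 2 * θ / (θ ^ 2 + ω ^ 2) * ouEigenfunction θ ω t := by
  unfold ouRightPrimitive ouEigenfunction
  field_simp
  ring

theorem stationary_ornstein_uhlenbeck_KL_eigenpair_general (T θ σ ω : ℝ) (hθ : 0 < θ)
    (heq : 2 * θ * ω * Real.cos (ω * T) + (θ^2 - ω^2) * Real.sin (ω * T) = 0)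
    (t : ℝ) (ht : t ∈ Set.Icc 0 T) :
    ∫ s in (0:ℝ)..T,
        σ^2 / (2 * θ) * Real.exp (-θ * |t - s|) *
          (ω * Real.cos (ω * s) + θ * Real.sin (ω * s))
      = σ^2 / (ω^2 + θ^2) * (ω * Real.cos (ω * t) + θ * Real.sin (ω * t)) := by
  obtain ⟨ht0, htT⟩ := ht
  have hθω : θ ^ 2 + ω ^ 2 ≠ 0 := by positivity
  have hint (a b : ℝ) : IntervalIntegrable
      (fun s => exp (-θ * |t - s|) * ouEigenfunction θ ω s) volume a b := by
    apply Continuous.intervalIntegrable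
    fun_prop
  calc ∫ s in (0:ℝ)..T, σ ^ 2 / (2 * θ) * exp (-θ * |t - s|) * ouEigenfunction θ ω s
      = σ ^ 2 / (2 * θ) * ∫ s in (0:ℝ)..T, exp (-θ * |t - s|) * ouEigenfunction θ ω s := by
        simp only [mul_assoc, intervalIntegral.integral_const_mul]
    _ = σ ^ 2 / (2 * θ) * (sin (ω * t) - ouRightPrimitive θ ω t) := by
        rw [← integral_add_adjacent_intervals (hint 0 t) (hint t T),
          integral_exp_abs_mul_ouEigenfunction_left θ ω t ht0,
          integral_exp_abs_mul_ouEigenfunction_right θ ω t T htT hθω,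
          ouRightPrimitive_eq_zero θ ω T heq]
        ring
    _ = σ ^ 2 / (ω ^ 2 + θ ^ 2) * ouEigenfunction θ ω t := by
        rw [sin_sub_ouRightPrimitive θ ω t hθω]
        field_simp
        ring

/-- Let `T > 0`, `θ > 0`, `σ ≥ 0`, and let `ω > 0` satisfy
`2θω·cos(ωT) + (θ² − ω²)·sin(ωT) = 0`. Then `φ(t) = ω·cos(ωt) + θ·sin(ωt)` is an
eigenfunction, with eigenvalue `σ²/(ω²+θ²)`, of the integral operator associated with the
covariance kernel `Γ(t,s) = (σ²/(2θ))e^{−θ|t−s|}` of the stationary Ornstein–Uhlenbeck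
process. -/
theorem stationary_ornstein_uhlenbeck_KL_eigenpair (T θ σ ω : ℝ) (hT : 0 < T) (hθ : 0 < θ)
    (hσ : 0 ≤ σ) (hω : 0 < ω)
    (heq : 2 * θ * ω * Real.cos (ω * T) + (θ^2 - ω^2) * Real.sin (ω * T) = 0)
    (t : ℝ) (ht : t ∈ Set.Icc 0 T) :
    ∫ s in (0:ℝ)..T,
        σ^2 / (2 * θ) * Real.exp (-θ * |t - s|) *
          (ω * Real.cos (ω * s) + θ * Real.sin (ω * s))
      = σ^2 / (ω^2 + θ^2) * (ω * Real.cos (ω * t) + θ * Real.sin (ω * t)) :=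
  stationary_ornstein_uhlenbeck_KL_eigenpair_general T θ σ ω hθ heq t ht
end

section
/- Let H ∈ (0,1), 0 ≤ t < T, and let s > 0, K > 0, σ > 0, r ∈ ℝ. Set v = T^{2H} − t^{2H} > 0, d₁ = (ln(s/K) + r(T−t) + (σ²/2)·v)/(σ·√v) and d₂ = (ln(s/K) + r(T−t) − (σ²/2)·v)/(σ·√v). Then, with Z a standard Gaussian random variable and Φ the standard normal cumulative distribution function, e^{−r(T−t)}·𝔼[ max( s·exp(σ·√v·Z + r(T−t) − (σ²/2)·v) − K, 0 ) ] = s·Φ(d₁) − K·e^{−r(T−t)}·Φ(d₂). -/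
/-!
On `{Z ≥ -d₂}`, with `d₂ = (log (s / K) + b) / a`, the payoff `s e^{aZ + b} - K` is
nonnegative and elsewhere it is negative, so the expectation splits into `K · P(Z ≥ -d₂) = K Φ(d₂)` and
`s e^b 𝔼[e^{aZ}; Z ≥ -d₂]`. Tilting the standard Gaussian by `e^{aZ}` shifts its mean to `a`,
which turns the second term into `s e^{b + a²/2} Φ(d₂ + a)`. With `a = σ √v` and
`b = r (T - t) - a² / 2` this is the fractional Black–Scholes formula.
-/

open Real MeasureTheory ProbabilityTheory
open scoped NNReal

lemma integral_exp_mul_gaussianReal (μ : ℝ) (v : ℝ≥0) (t : ℝ) :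
    ∫ x, exp (t * x) ∂gaussianReal μ v = exp (μ * t + v * t ^ 2 / 2) :=
  congrFun mgf_fun_id_gaussianReal t

lemma gaussianReal_tilted_mul (μ : ℝ) (v : ℝ≥0) (t : ℝ) :
    (gaussianReal μ v).tilted (t * ·) = gaussianReal (μ + v * t) v := by
  by_cases hv : v = 0
  · subst hv
    simp [Measure.tilted, gaussianReal_zero_var, dirac_withDensity, mul_comm]
  have hdensity (x : ℝ) : gaussianPDFReal μ v x * (exp (t * x) / exp (μ * t + v * t ^ 2 / 2))
      = gaussianPDFReal (μ + v * t) v x := by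
    have hv' : (v : ℝ) ≠ 0 := mod_cast hv
    simp only [gaussianPDFReal, mul_assoc, ← exp_add, ← exp_sub]
    congr 2
    field_simp
    ring
  rw [Measure.tilted, integral_exp_mul_gaussianReal, gaussianReal_of_var_ne_zero _ hv,
    gaussianReal_of_var_ne_zero _ hv,
    ← withDensity_mul _ (measurable_gaussianPDF _ _) (by fun_prop)]
  congr 1
  ext x
  rw [Pi.mul_apply, gaussianPDF, gaussianPDF, ← ENNReal.ofReal_mul (gaussianPDFReal_nonneg _ _ _),
    hdensity]

lemma setIntegral_exp_mul_gaussianReal (μ : ℝ) (v : ℝ≥0) (t : ℝ) (S : Set ℝ) :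
    ∫ x in S, exp (t * x) ∂gaussianReal μ v
      = exp (μ * t + v * t ^ 2 / 2) * (gaussianReal (μ + v * t) v S).toReal := by
  rw [← gaussianReal_tilted_mul, tilted_apply_eq_ofReal_integral _ S,
    integral_exp_mul_gaussianReal, integral_div, ENNReal.toReal_ofReal (by positivity),
    mul_div_cancel₀ _ (exp_pos _).ne']

lemma gaussianReal_Ici_eq_gaussianReal_Iic (μ : ℝ) (v : ℝ≥0) (x : ℝ) :
    gaussianReal μ v (Set.Ici x) = gaussianReal 0 v (Set.Iic (μ - x)) := by
  rw [← sub_self μ, ← gaussianReal_map_const_sub, Measure.map_apply (by fun_prop) measurableSet_Iic]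
  congr 1
  ext z
  simp

lemma le_mul_exp_add_iff {s K a : ℝ} (hs : 0 < s) (hK : 0 < K) (ha : 0 < a) (b z : ℝ) :
    K ≤ s * exp (a * z + b) ↔ -((log (s / K) + b) / a) ≤ z := by
  rw [neg_le, le_div_iff₀ ha, ← log_le_log_iff hK (by positivity), log_mul hs.ne' (exp_pos _).ne',
    log_exp, log_div hs.ne' hK.ne']
  constructor <;> intro h <;> linarith

lemma integral_max_mul_exp_sub_gaussianReal {s K a : ℝ} (hs : 0 < s) (hK : 0 < K) (ha : 0 < a)
    (b : ℝ) :
    ∫ z, max (s * exp (a * z + b) - K) 0 ∂gaussianReal 0 1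
      = s * exp (b + a ^ 2 / 2) * (gaussianReal 0 1 (Set.Iic ((log (s / K) + b) / a + a))).toReal
        - K * (gaussianReal 0 1 (Set.Iic ((log (s / K) + b) / a))).toReal := by
  set d := (log (s / K) + b) / a
  have hpayoff : (fun z => max (s * exp (a * z + b) - K) 0)
      = (Set.Ici (-d)).indicator (fun z => s * exp b * exp (a * z) - K) := by
    ext z
    by_cases hz : z ∈ Set.Ici (-d)
    · rw [Set.indicator_of_mem hz,
        max_eq_left (sub_nonneg.2 ((le_mul_exp_add_iff hs hK ha b z).2 hz)), add_comm, exp_add,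
        mul_assoc]
    · rw [Set.indicator_of_notMem hz, max_eq_right
        (sub_nonpos.2 (not_le.1 (mt (le_mul_exp_add_iff hs hK ha b z).1 hz)).le)]
  have hint : Integrable (fun z => s * exp b * exp (a * z)) (gaussianReal 0 1) :=
    (integrable_exp_mul_gaussianReal a).const_mul _
  rw [hpayoff, integral_indicator measurableSet_Ici,
    integral_sub hint.integrableOn (integrable_const K), integral_const_mul,
    setIntegral_exp_mul_gaussianReal, setIntegral_const, measureReal_def,
    gaussianReal_Ici_eq_gaussianReal_Iic, gaussianReal_Ici_eq_gaussianReal_Iic]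
  simp only [zero_mul, zero_add, NNReal.coe_one, one_mul, smul_eq_mul, sub_neg_eq_add, add_comm a d,
    exp_add]
  ring

/-- Fractional Black–Scholes formula: with `v = T^{2H} − t^{2H} > 0` and `Z` a standard
Gaussian random variable, the discounted expectation of the call payoff equals
`s·Φ(d₁) − K·e^{−r(T−t)}·Φ(d₂)`, where `Φ` is the standard normal cumulative
distribution function. -/
theorem fractional_black_scholes_formula (H : ℝ) (hH : H ∈ Set.Ioo (0:ℝ) 1)
    (t T : ℝ) (ht : 0 ≤ t) (htT : t < T)
    (s K σ : ℝ) (hs : 0 < s) (hK : 0 < K) (hσ : 0 < σ) (r : ℝ) :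
    0 < T ^ (2 * H) - t ^ (2 * H) ∧
    Real.exp (-r * (T - t)) *
        (∫ z, max (s * Real.exp (σ * Real.sqrt (T ^ (2 * H) - t ^ (2 * H)) * z
              + r * (T - t) - σ^2 / 2 * (T ^ (2 * H) - t ^ (2 * H))) - K) 0
          ∂(gaussianReal 0 1))
      = s * ((gaussianReal 0 1) (Set.Iic
              ((Real.log (s / K) + r * (T - t)
                  + σ^2 / 2 * (T ^ (2 * H) - t ^ (2 * H)))
                / (σ * Real.sqrt (T ^ (2 * H) - t ^ (2 * H)))))).toReal
        - K * Real.exp (-r * (T - t)) *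
            ((gaussianReal 0 1) (Set.Iic
              ((Real.log (s / K) + r * (T - t)
                  - σ^2 / 2 * (T ^ (2 * H) - t ^ (2 * H)))
                / (σ * Real.sqrt (T ^ (2 * H) - t ^ (2 * H)))))).toReal := by
  have hv : 0 < T ^ (2 * H) - t ^ (2 * H) :=
    sub_pos.2 (rpow_lt_rpow ht htT (by linarith [hH.1]))
  refine ⟨hv, ?_⟩
  set v := T ^ (2 * H) - t ^ (2 * H)
  set a := σ * √v with ha_def
  have ha : 0 < a := by positivity
  have hw : σ ^ 2 / 2 * v = a ^ 2 / 2 := by rw [ha_def, mul_pow, sq_sqrt hv.le]; ring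
  have hd₁ : (log (s / K) + r * (T - t) + a ^ 2 / 2) / a
      = (log (s / K) + (r * (T - t) - a ^ 2 / 2)) / a + a := by
    field_simp; ring
  simp_rw [hw, hd₁, add_sub_assoc, integral_max_mul_exp_sub_gaussianReal hs hK ha, sub_add_cancel]
  rw [neg_mul, exp_neg]
  field_simp
end
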